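/- Let R be a w-stable domain. Then R is v-coherent if and only if every t-maximal ideal of R is v-finite (equal to J^v for some finitely generated ideal J). -/
import Mathlib


noncomputable section

section Defs

variable (R K : Type*) [CommRing R] [CommRing K] [Algebra R K]

/-- The residual `(E : F) = {x ∈ K : xF ⊆ E}` of two `R`-submodules of `K`. -/
def resid (E F : Submodule R K) : Submodule R K where
  carrier := {x : K | ∀ y ∈ F, x * y ∈ E}
  add_mem' := by
    intro a b ha hb y hy
    simpa only [Set.mem_setOf_eq, add_mul] using E.add_mem (ha y hy) (hb y hy)
  zero_mem' := by
    intro y hy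
    simp
  smul_mem' := by
    intro c x hx y hy
    simpa [smul_mul_assoc] using E.smul_mem c (hx y hy)

/-- The image of an ideal of `R` as an `R`-submodule of `K`. -/
def idealToSub (I : Ideal R) : Submodule R K :=
  Submodule.map (Algebra.linearMap R K) I

end Defs

/-- A semistar operation on an integral domain `R` with quotient field `K`. -/
structure SemistarOp (R K : Type*) [CommRing R] [Field K] [Algebra R K] where
  star : Submodule R K → Submodule R K
  star_smul : ∀ x : K, x ≠ 0 → ∀ E : Submodule R K, E ≠ ⊥ →
    star (Submodule.span R {x} * E) = Submodule.span R {x} * star E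
  mono : ∀ E F : Submodule R K, E ≠ ⊥ → E ≤ F → star E ≤ star F
  le_star : ∀ E : Submodule R K, E ≠ ⊥ → E ≤ star E
  idem : ∀ E : Submodule R K, E ≠ ⊥ → star (star E) = star E

section Ops

variable (R K : Type*) [CommRing R] [Field K] [Algebra R K]

/-- The `v`-operation (divisorial closure) `E ↦ (R : (R : E))`. -/
def vop (E : Submodule R K) : Submodule R K := resid R K 1 (resid R K 1 E)

/-- The `t`-operation, the finite-type version of `v`. -/
def top (E : Submodule R K) : Submodule R K :=
  ⨆ (F : Submodule R K) (_ : F.FG ∧ F ≠ ⊥ ∧ F ≤ E), vop R K F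

/-- The `w`-operation `E ↦ ⋃ {(E : F) : F f.g. nonzero with F^t = R}`. -/
def wop (E : Submodule R K) : Submodule R K :=
  ⨆ (F : Submodule R K) (_ : F.FG ∧ F ≠ ⊥ ∧ top R K F = 1), resid R K E F

/-- `M` is a maximal proper `f`-closed ideal (e.g. a `⋆`-maximal ideal). -/
def IsOpMaxIdeal (f : Submodule R K → Submodule R K) (M : Submodule R K) : Prop :=
  M ≠ ⊥ ∧ M < 1 ∧ f M = M ∧
    ∀ J : Submodule R K, J ≠ ⊥ → J < 1 → f J = J → M ≤ J → M = J

/-- The localization `E R_P` of a submodule `E` at a prime `P`, inside `K`. -/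
def locSub (P : Ideal R) (E : Submodule R K) : Submodule R K :=
  Submodule.span R {x : K | ∃ s : R, s ∉ P ∧ s • x ∈ E}

/-- The subring of `K` determined by the submodule `T` is a stable domain:
every nonzero ideal `E` of `T` is invertible in `(E : E)`. -/
def SubringStable (T : Submodule R K) : Prop :=
  ∀ E : Submodule R K, E ≠ ⊥ → E ≤ T → T * E ≤ E →
    E * resid R K (resid R K E E) E = resid R K E E

/-- The subring of `K` determined by `T` is a divisorial domain: every nonzero
fractional ideal of `T` is divisorial. -/
def SubringDivisorial (T : Submodule R K) : Prop :=
  ∀ J : Submodule R K, J ≠ ⊥ → T * J ≤ J →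
    (∃ x : K, x ≠ 0 ∧ ∀ y ∈ J, x * y ∈ T) →
    resid R K T (resid R K T J) = J

/-- The subring of `K` determined by `T` is `v`-coherent: for every nonzero
finitely generated ideal `I = S·T` of `T`, the ideal `(T : I)` is `v`-finite. -/
def SubringVCoherent (T : Submodule R K) : Prop :=
  ∀ S : Submodule R K, S.FG → S ≠ ⊥ → S ≤ T →
    ∃ H : Submodule R K, H.FG ∧ H ≠ ⊥ ∧
      resid R K T (S * T) = resid R K T (resid R K T (H * T))

/-- `R` has finite character with respect to the maximal ideals singled out by `f`. -/
def OpFiniteCharacter (f : Submodule R K → Submodule R K) : Prop :=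
  ∀ I : Submodule R K, I ≠ ⊥ → I ≤ 1 →
    {M : Submodule R K | IsOpMaxIdeal R K f M ∧ I ≤ M}.Finite

/-- Every nonzero finitely generated ideal is `t`-invertible (PvMD). -/
def IsPvMDsub : Prop :=
  ∀ G : Submodule R K, G.FG → G ≠ ⊥ → G ≤ 1 →
    top R K (G * resid R K 1 G) = 1

end Ops

namespace SemistarOp

variable {R K : Type*} [CommRing R] [Field K] [Algebra R K] (s : SemistarOp R K)

/-- `⋆`-stability for the ideals of the subring determined by `T`. -/
def StarStableOver (T : Submodule R K) : Prop :=
  ∀ E : Submodule R K, E ≠ ⊥ → E ≤ T → T * E ≤ E →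
    s.star (s.star E * resid R K (resid R K (s.star E) (s.star E)) (s.star E))
      = resid R K (s.star E) (s.star E)

/-- `R` is `⋆`-stable: each nonzero ideal `I` is such that `I^⋆` is
`⋆̇`-invertible in `(I^⋆ : I^⋆)`. -/
def StarStable : Prop := s.StarStableOver (1 : Submodule R K)

/-- `⋆` is of finite type. -/
def FinType : Prop :=
  ∀ E : Submodule R K, E ≠ ⊥ →
    s.star E = ⨆ (F : Submodule R K) (_ : F.FG ∧ F ≠ ⊥ ∧ F ≤ E), s.star F

/-- `⋆ = ⋆̃`: the operation is spectral and of finite type, i.e. it is given by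
`E^⋆ = ⋃ {(E : F) : F f.g. nonzero with F^⋆ = R}`. -/
def IsSpectralFT : Prop :=
  ∀ E : Submodule R K, E ≠ ⊥ →
    s.star E = ⨆ (F : Submodule R K) (_ : F.FG ∧ F ≠ ⊥ ∧ s.star F = 1), resid R K E F

/-- The `⋆`-integral closure `R^{[⋆]} = ⋃ {(F^⋆ : F^⋆) : F f.g. nonzero}`. -/
def starIntClosure : Submodule R K :=
  ⨆ (F : Submodule R K) (_ : F.FG ∧ F ≠ ⊥), resid R K (s.star F) (s.star F)

end SemistarOp


section MoreOps

variable (R K : Type*) [CommRing R] [Field K] [Algebra R K]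

/-- `R` is `w`-stable: for each nonzero ideal `I`, `I^w` is invertible in
`(I^w : I^w)` with respect to the restriction of `w`. -/
def WStable : Prop :=
  ∀ I : Submodule R K, I ≠ ⊥ → I ≤ 1 →
    wop R K (wop R K I * resid R K (resid R K (wop R K I) (wop R K I)) (wop R K I))
      = resid R K (wop R K I) (wop R K I)

/-- `R` is completely integrally closed in its quotient field `K`. -/
def CICsub : Prop :=
  ∀ x : K, (∃ c : R, c ≠ 0 ∧ ∀ n : ℕ, c • x ^ n ∈ (1 : Submodule R K)) →
    x ∈ (1 : Submodule R K)

/-- `R` is `w`-divisorial: `w = v` on nonzero fractional ideals. -/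
def WDivisorial : Prop :=
  ∀ J : Submodule R K, J ≠ ⊥ →
    (∃ d : R, d ≠ 0 ∧ ∀ x ∈ J, d • x ∈ (1 : Submodule R K)) →
    wop R K J = vop R K J

/-- `R` is a Krull domain: completely integrally closed with the ascending chain
condition on (integral) divisorial ideals. -/
def IsKrullSub : Prop :=
  CICsub R K ∧
    ∀ c : ℕ → Submodule R K,
      (∀ n, c n ≠ ⊥ ∧ c n ≤ 1 ∧ vop R K (c n) = c n) → Monotone c →
        ∃ n, ∀ m, n ≤ m → c m = c n

end MoreOps

end

section Statement18Lemmas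

open Submodule

variable {R K : Type*} [CommRing R] [Field K] [Algebra R K]

lemma st18_mem_resid {E F : Submodule R K} {x : K} :
    x ∈ resid R K E F ↔ ∀ y ∈ F, x * y ∈ E := Iff.rfl

lemma st18_mul_le_mul {A A' B B' : Submodule R K} (h1 : A ≤ A') (h2 : B ≤ B') :
    A * B ≤ A' * B' :=
  Submodule.mul_le.mpr fun m hm n hn => Submodule.mul_mem_mul (h1 hm) (h2 hn)

lemma st18_le_resid_iff {G E F : Submodule R K} :
    G ≤ resid R K E F ↔ G * F ≤ E := by
  constructor
  · intro h
    exact Submodule.mul_le.mpr fun g hg f hf => (h hg) f hf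
  · intro h g hg
    exact st18_mem_resid.mpr fun y hy => h (Submodule.mul_mem_mul hg hy)

lemma st18_resid_mono_left {E E' F : Submodule R K} (h : E ≤ E') :
    resid R K E F ≤ resid R K E' F :=
  fun _ hx => st18_mem_resid.mpr fun y hy => h (st18_mem_resid.mp hx y hy)

lemma st18_resid_anti_right {E F F' : Submodule R K} (h : F ≤ F') :
    resid R K E F' ≤ resid R K E F :=
  fun _ hx => st18_mem_resid.mpr fun y hy => st18_mem_resid.mp hx y (h hy)

lemma st18_mul_mem_one_right {N : Submodule R K} {x y : K}
    (hx : x ∈ N) (hy : y ∈ (1 : Submodule R K)) : x * y ∈ N := by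
  obtain ⟨r, rfl⟩ := Submodule.mem_one.mp hy
  rw [mul_comm, ← Algebra.smul_def]
  exact N.smul_mem r hx

lemma st18_one_mem_one : (1 : K) ∈ (1 : Submodule R K) :=
  Submodule.mem_one.mpr ⟨1, map_one _⟩

lemma st18_resid_one_right (E : Submodule R K) : resid R K E 1 = E := by
  apply le_antisymm
  · intro x hx
    have := st18_mem_resid.mp hx 1 st18_one_mem_one
    rwa [mul_one] at this
  · intro x hx
    exact st18_mem_resid.mpr fun y hy => st18_mul_mem_one_right hx hy

lemma st18_resid_mul_right {E A B : Submodule R K} :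
    resid R K E (A * B) = resid R K (resid R K E B) A := by
  apply le_antisymm
  · intro x hx
    refine st18_mem_resid.mpr fun a ha => st18_mem_resid.mpr fun b hb => ?_
    rw [mul_assoc]
    exact st18_mem_resid.mp hx _ (Submodule.mul_mem_mul ha hb)
  · intro x hx
    refine st18_mem_resid.mpr fun y hy => ?_
    refine Submodule.mul_induction_on hy (fun a ha b hb => ?_) (fun y z hy hz => ?_)
    · rw [← mul_assoc]
      exact st18_mem_resid.mp (st18_mem_resid.mp hx a ha) b hb
    · rw [mul_add]
      exact add_mem hy hz

lemma st18_vop_def (E : Submodule R K) :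
    vop R K E = resid R K 1 (resid R K 1 E) := rfl

lemma st18_le_vop (E : Submodule R K) : E ≤ vop R K E := by
  intro x hx
  exact st18_mem_resid.mpr fun y hy => by
    rw [mul_comm]; exact st18_mem_resid.mp hy x hx

lemma st18_vop_mono {E F : Submodule R K} (h : E ≤ F) : vop R K E ≤ vop R K F :=
  st18_resid_anti_right (st18_resid_anti_right h)

lemma st18_dual_vop (E : Submodule R K) :
    resid R K 1 (vop R K E) = resid R K 1 E := by
  apply le_antisymm
  · exact st18_resid_anti_right (st18_le_vop E)
  · exact st18_le_vop (resid R K 1 E)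

lemma st18_vop_dual (E : Submodule R K) :
    vop R K (resid R K 1 E) = resid R K 1 E :=
  st18_dual_vop E

lemma st18_vop_idem (E : Submodule R K) : vop R K (vop R K E) = vop R K E := by
  rw [st18_vop_def, st18_dual_vop, ← st18_vop_def]

lemma st18_vop_one : vop R K (1 : Submodule R K) = 1 := by
  rw [st18_vop_def, st18_resid_one_right, st18_resid_one_right]

lemma st18_vop_resid {E : Submodule R K} (hE : vop R K E = E) (F : Submodule R K) :
    vop R K (resid R K E F) = resid R K E F := by
  have hrw : resid R K E F = resid R K 1 (F * resid R K 1 E) := by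
    conv_lhs => rw [← hE]
    rw [st18_resid_mul_right]
    rfl
  rw [hrw]
  exact st18_vop_dual _

lemma st18_dual_mul_vop (A B : Submodule R K) :
    resid R K 1 (A * vop R K B) = resid R K 1 (A * B) := by
  apply le_antisymm
  · exact st18_resid_anti_right (st18_mul_le_mul le_rfl (st18_le_vop B))
  · intro x hx
    refine st18_mem_resid.mpr fun y hy => ?_
    refine Submodule.mul_induction_on hy (fun a ha b hb => ?_) (fun y z hy hz => ?_)
    · have h1 : x * a ∈ resid R K 1 B := st18_mem_resid.mpr fun b' hb' => by
        rw [mul_assoc]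
        exact st18_mem_resid.mp hx _ (Submodule.mul_mem_mul ha hb')
      have h2 : b * (x * a) ∈ (1 : Submodule R K) := st18_mem_resid.mp hb _ h1
      have heq : x * (a * b) = b * (x * a) := by ring
      rw [heq]
      exact h2
    · rw [mul_add]
      exact add_mem hy hz

lemma st18_vop_mul_vop (A B : Submodule R K) :
    vop R K (A * vop R K B) = vop R K (A * B) := by
  rw [st18_vop_def, st18_dual_mul_vop, ← st18_vop_def]

lemma st18_top_def (E : Submodule R K) :
    top R K E = ⨆ (F : Submodule R K) (_ : F.FG ∧ F ≠ ⊥ ∧ F ≤ E), vop R K F := rfl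

lemma st18_le_top (E : Submodule R K) : E ≤ top R K E := by
  intro x hx
  by_cases hx0 : x = 0
  · subst hx0; exact zero_mem _
  · have h1 : x ∈ vop R K (Submodule.span R {x}) :=
      st18_le_vop _ (Submodule.mem_span_singleton_self x)
    have h2 : Submodule.span R {x} ≠ ⊥ := by
      rw [Ne, Submodule.span_singleton_eq_bot]; exact hx0
    exact le_iSup₂ (f := fun F _ => vop R K F) (Submodule.span R {x})
      ⟨Submodule.fg_span_singleton x, h2, (Submodule.span_singleton_le_iff_mem _ _).mpr hx⟩ h1

lemma st18_top_le_vop (E : Submodule R K) : top R K E ≤ vop R K E :=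
  iSup₂_le fun _ hG => st18_vop_mono hG.2.2

lemma st18_top_fg {F : Submodule R K} (hfg : F.FG) (h0 : F ≠ ⊥) :
    top R K F = vop R K F :=
  le_antisymm (st18_top_le_vop F)
    (le_iSup₂ (f := fun G _ => vop R K G) F ⟨hfg, h0, le_rfl⟩)

lemma st18_one_fg : (1 : Submodule R K).FG := by
  rw [Submodule.one_eq_span]
  exact Submodule.fg_span_singleton _

lemma st18_one_ne_bot : (1 : Submodule R K) ≠ ⊥ :=
  (Submodule.ne_bot_iff _).mpr ⟨1, st18_one_mem_one, one_ne_zero⟩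

lemma st18_top_one : top R K (1 : Submodule R K) = 1 := by
  rw [st18_top_fg st18_one_fg st18_one_ne_bot, st18_vop_one]

lemma st18_ne_bot_iff {N : Submodule R K} : N ≠ ⊥ ↔ ∃ x ∈ N, x ≠ 0 :=
  Submodule.ne_bot_iff N

lemma st18_mul_ne_bot {A B : Submodule R K} (hA : A ≠ ⊥) (hB : B ≠ ⊥) :
    A * B ≠ ⊥ := by
  obtain ⟨a, haA, ha⟩ := st18_ne_bot_iff.mp hA
  obtain ⟨b, hbB, hb⟩ := st18_ne_bot_iff.mp hB
  exact st18_ne_bot_iff.mpr ⟨a * b, Submodule.mul_mem_mul haA hbB, mul_ne_zero ha hb⟩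

/-- GV-ideals: finitely generated, nonzero, with `t`-closure equal to `R`. -/
def IsGV (R K : Type*) [CommRing R] [Field K] [Algebra R K]
    (F : Submodule R K) : Prop :=
  F.FG ∧ F ≠ ⊥ ∧ top R K F = 1

lemma st18_gv_one : IsGV R K (1 : Submodule R K) :=
  ⟨st18_one_fg, st18_one_ne_bot, st18_top_one⟩

lemma st18_gv_vop {F : Submodule R K} (h : IsGV R K F) : vop R K F = 1 := by
  rw [← st18_top_fg h.1 h.2.1]; exact h.2.2

lemma st18_gv_le_one {F : Submodule R K} (h : IsGV R K F) : F ≤ 1 :=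
  (st18_le_vop F).trans (st18_gv_vop h).le

lemma st18_gv_mul {F₁ F₂ : Submodule R K} (h1 : IsGV R K F₁) (h2 : IsGV R K F₂) :
    IsGV R K (F₁ * F₂) := by
  refine ⟨h1.1.mul h2.1, st18_mul_ne_bot h1.2.1 h2.2.1, ?_⟩
  rw [st18_top_fg (h1.1.mul h2.1) (st18_mul_ne_bot h1.2.1 h2.2.1),
    ← st18_vop_mul_vop, st18_gv_vop h2, mul_one, st18_gv_vop h1]

lemma st18_wop_def (E : Submodule R K) :
    wop R K E =
      ⨆ (F : Submodule R K) (_ : F.FG ∧ F ≠ ⊥ ∧ top R K F = 1), resid R K E F := rfl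

lemma st18_resid_le_wop {E F : Submodule R K} (h : IsGV R K F) :
    resid R K E F ≤ wop R K E :=
  le_iSup₂ (f := fun F _ => resid R K E F) F ⟨h.1, h.2.1, h.2.2⟩

lemma st18_le_wop (E : Submodule R K) : E ≤ wop R K E := by
  have := st18_resid_le_wop (E := E) st18_gv_one
  rwa [st18_resid_one_right] at this

lemma st18_wop_mono {E E' : Submodule R K} (h : E ≤ E') : wop R K E ≤ wop R K E' :=
  iSup₂_le fun F hF => (st18_resid_mono_left h).trans
    (st18_resid_le_wop ⟨hF.1, hF.2.1, hF.2.2⟩)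

lemma st18_mem_top_extract {F : Submodule R K} (hF : F ≠ ⊥)
    (h1 : (1 : K) ∈ top R K F) :
    ∃ G : Submodule R K, G.FG ∧ G ≠ ⊥ ∧ G ≤ F ∧ resid R K 1 G ≤ 1 := by
  obtain ⟨x₀, hx₀F, hx₀⟩ := st18_ne_bot_iff.mp hF
  have hnsub : Nonempty {G : Submodule R K // G.FG ∧ G ≠ ⊥ ∧ G ≤ F} :=
    ⟨⟨Submodule.span R {x₀},
      Submodule.fg_span_singleton x₀,
      by rw [Ne, Submodule.span_singleton_eq_bot]; exact hx₀,
      (Submodule.span_singleton_le_iff_mem _ _).mpr hx₀F⟩⟩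
  have hdir : Directed (· ≤ ·)
      (fun G : {G : Submodule R K // G.FG ∧ G ≠ ⊥ ∧ G ≤ F} => vop R K G.1) := by
    rintro ⟨G₁, h₁⟩ ⟨G₂, h₂⟩
    refine ⟨⟨G₁ ⊔ G₂, h₁.1.sup h₂.1, ?_, sup_le h₁.2.2 h₂.2.2⟩,
      st18_vop_mono le_sup_left, st18_vop_mono le_sup_right⟩
    intro hbot
    exact h₁.2.1 (le_bot_iff.mp (le_sup_left.trans hbot.le))
  rw [st18_top_def, iSup_subtype'] at h1
  obtain ⟨⟨G, hG⟩, hmem⟩ := (Submodule.mem_iSup_of_directed _ hdir).mp h1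
  refine ⟨G, hG.1, hG.2.1, hG.2.2, ?_⟩
  intro u hu
  have := st18_mem_resid.mp hmem u hu
  rwa [one_mul] at this

lemma st18_wop_le_top (E : Submodule R K) : wop R K E ≤ top R K E := by
  refine iSup₂_le fun F hF => ?_
  intro x hx
  by_cases hx0 : x = 0
  · subst hx0; exact zero_mem _
  · have h1F : (1 : K) ∈ top R K F := by
      rw [hF.2.2]; exact st18_one_mem_one
    obtain ⟨G, hGfg, hG0, hGF, hGle⟩ := st18_mem_top_extract hF.2.1 h1F
    have hxGfg : (Submodule.span R {x} * G).FG := (Submodule.fg_span_singleton x).mul hGfg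
    have hxG0 : Submodule.span R {x} * G ≠ ⊥ := by
      refine st18_mul_ne_bot ?_ hG0
      rw [Ne, Submodule.span_singleton_eq_bot]; exact hx0
    have hxGE : Submodule.span R {x} * G ≤ E := by
      rw [← st18_le_resid_iff]
      refine (Submodule.span_singleton_le_iff_mem _ _).mpr (st18_mem_resid.mpr fun g hg => ?_)
      exact st18_mem_resid.mp hx g (hGF hg)
    have hxmem : x ∈ vop R K (Submodule.span R {x} * G) := by
      refine st18_mem_resid.mpr fun y hy => ?_
      have hyx : y * x ∈ resid R K 1 G := st18_mem_resid.mpr fun g hg => by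
        rw [mul_assoc]
        exact st18_mem_resid.mp hy _
          (Submodule.mul_mem_mul (Submodule.mem_span_singleton_self x) hg)
      rw [mul_comm]
      exact hGle hyx
    exact le_iSup₂ (f := fun F _ => vop R K F) (Submodule.span R {x} * G)
      ⟨hxGfg, hxG0, hxGE⟩ hxmem

lemma st18_wop_le_vop (E : Submodule R K) : wop R K E ≤ vop R K E :=
  (st18_wop_le_top E).trans (st18_top_le_vop E)

lemma st18_wop_of_vop {E : Submodule R K} (h : vop R K E = E) : wop R K E = E :=
  le_antisymm ((st18_wop_le_vop E).trans h.le) (st18_le_wop E)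

lemma st18_le_wop_mul {X F : Submodule R K} (hF : IsGV R K F) :
    X ≤ wop R K (X * F) := by
  intro x hx
  refine st18_resid_le_wop hF (st18_mem_resid.mpr fun f hf => ?_)
  exact Submodule.mul_mem_mul hx hf

lemma st18_one_mem_wop {X : Submodule R K} (h1 : (1 : K) ∈ wop R K X) :
    ∃ F : Submodule R K, IsGV R K F ∧ F ≤ X := by
  have hnsub : Nonempty {F : Submodule R K // F.FG ∧ F ≠ ⊥ ∧ top R K F = 1} :=
    ⟨⟨1, st18_one_fg, st18_one_ne_bot, st18_top_one⟩⟩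
  have hdir : Directed (· ≤ ·)
      (fun F : {F : Submodule R K // F.FG ∧ F ≠ ⊥ ∧ top R K F = 1} =>
        resid R K X F.1) := by
    rintro ⟨F₁, h₁⟩ ⟨F₂, h₂⟩
    have hGV : IsGV R K (F₁ * F₂) := st18_gv_mul ⟨h₁.1, h₁.2.1, h₁.2.2⟩ ⟨h₂.1, h₂.2.1, h₂.2.2⟩
    refine ⟨⟨F₁ * F₂, hGV.1, hGV.2.1, hGV.2.2⟩, ?_, ?_⟩
    · refine st18_le_resid_iff.mpr ?_
      calc resid R K X F₁ * (F₁ * F₂) = resid R K X F₁ * F₁ * F₂ := (mul_assoc _ _ _).symm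
        _ ≤ X * F₂ := st18_mul_le_mul (st18_le_resid_iff.mp le_rfl) le_rfl
        _ ≤ X * 1 := st18_mul_le_mul le_rfl (st18_gv_le_one ⟨h₂.1, h₂.2.1, h₂.2.2⟩)
        _ = X := mul_one X
    · refine st18_le_resid_iff.mpr ?_
      calc resid R K X F₂ * (F₁ * F₂) = resid R K X F₂ * F₂ * F₁ := by ring
        _ ≤ X * F₁ := st18_mul_le_mul (st18_le_resid_iff.mp le_rfl) le_rfl
        _ ≤ X * 1 := st18_mul_le_mul le_rfl (st18_gv_le_one ⟨h₁.1, h₁.2.1, h₁.2.2⟩)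
        _ = X := mul_one X
  rw [st18_wop_def, iSup_subtype'] at h1
  obtain ⟨⟨F, hF⟩, hmem⟩ := (Submodule.mem_iSup_of_directed _ hdir).mp h1
  refine ⟨F, ⟨hF.1, hF.2.1, hF.2.2⟩, fun f hf => ?_⟩
  have := st18_mem_resid.mp hmem f hf
  rwa [one_mul] at this

lemma st18_mem_mul_fg {A B : Submodule R K} {x : K} (hx : x ∈ A * B) :
    ∃ A₀ B₀ : Submodule R K,
      A₀.FG ∧ B₀.FG ∧ A₀ ≤ A ∧ B₀ ≤ B ∧ x ∈ A₀ * B₀ := by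
  refine Submodule.mul_induction_on hx (fun m hm n hn => ?_) (fun y z hy hz => ?_)
  · exact ⟨Submodule.span R {m}, Submodule.span R {n},
      Submodule.fg_span_singleton m, Submodule.fg_span_singleton n,
      (Submodule.span_singleton_le_iff_mem _ _).mpr hm,
      (Submodule.span_singleton_le_iff_mem _ _).mpr hn,
      Submodule.mul_mem_mul (Submodule.mem_span_singleton_self m)
        (Submodule.mem_span_singleton_self n)⟩
  · obtain ⟨A₁, B₁, hA₁, hB₁, hA₁A, hB₁B, hy1⟩ := hy
    obtain ⟨A₂, B₂, hA₂, hB₂, hA₂A, hB₂B, hz1⟩ := hz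
    exact ⟨A₁ ⊔ A₂, B₁ ⊔ B₂, hA₁.sup hA₂, hB₁.sup hB₂, sup_le hA₁A hA₂A,
      sup_le hB₁B hB₂B,
      add_mem (st18_mul_le_mul le_sup_left le_sup_left hy1)
        (st18_mul_le_mul le_sup_right le_sup_right hz1)⟩

lemma st18_fg_le_mul {F A B : Submodule R K} (hF : F.FG) (h : F ≤ A * B) :
    ∃ A₀ B₀ : Submodule R K,
      A₀.FG ∧ B₀.FG ∧ A₀ ≤ A ∧ B₀ ≤ B ∧ F ≤ A₀ * B₀ := by
  classical
  suffices Hmain : ∀ s : Finset K, Submodule.span R (↑s : Set K) ≤ A * B →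
      ∃ A₀ B₀ : Submodule R K, A₀.FG ∧ B₀.FG ∧ A₀ ≤ A ∧ B₀ ≤ B ∧
        Submodule.span R (↑s : Set K) ≤ A₀ * B₀ by
    obtain ⟨s, rfl⟩ := hF
    exact Hmain s h
  intro s
  induction s using Finset.induction_on with
  | empty =>
    exact fun _ => ⟨⊥, ⊥, Submodule.fg_bot, Submodule.fg_bot, bot_le, bot_le, by
      rw [Finset.coe_empty, Submodule.span_empty]; exact bot_le⟩
  | @insert a s ha ih =>
    intro h
    have hs : Submodule.span R (↑s : Set K) ≤ A * B := by
      refine le_trans (Submodule.span_mono ?_) h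
      intro y hy
      exact Finset.mem_insert_of_mem hy
    obtain ⟨A₂, B₂, hA₂, hB₂, hA₂A, hB₂B, hs2⟩ := ih hs
    have hamem : a ∈ A * B := h (Submodule.subset_span (Finset.mem_insert_self a s))
    obtain ⟨A₁, B₁, hA₁, hB₁, hA₁A, hB₁B, ha1⟩ := st18_mem_mul_fg hamem
    refine ⟨A₁ ⊔ A₂, B₁ ⊔ B₂, hA₁.sup hA₂, hB₁.sup hB₂, sup_le hA₁A hA₂A,
      sup_le hB₁B hB₂B, ?_⟩
    rw [Finset.coe_insert, Submodule.span_insert]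
    refine sup_le ?_ ?_
    · exact (Submodule.span_singleton_le_iff_mem _ _).mpr
        (st18_mul_le_mul le_sup_left le_sup_left ha1)
    · exact hs2.trans (st18_mul_le_mul le_sup_right le_sup_right)

lemma st18_resid_span_mul {c : K} (hc : c ≠ 0) (X : Submodule R K) :
    resid R K 1 (Submodule.span R {c} * X)
      = Submodule.span R {c⁻¹} * resid R K 1 X := by
  ext x
  constructor
  · intro hx
    refine Submodule.mem_span_singleton_mul.mpr ⟨c * x, ?_, by
      rw [← mul_assoc, inv_mul_cancel₀ hc, one_mul]⟩
    refine st18_mem_resid.mpr fun w hw => ?_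
    have : c * x * w = x * (c * w) := by ring
    rw [this]
    exact st18_mem_resid.mp hx _
      (Submodule.mul_mem_mul (Submodule.mem_span_singleton_self c) hw)
  · intro hx
    obtain ⟨z, hz, rfl⟩ := Submodule.mem_span_singleton_mul.mp hx
    refine st18_mem_resid.mpr fun y hy => ?_
    obtain ⟨w, hw, rfl⟩ := Submodule.mem_span_singleton_mul.mp hy
    have heq : c⁻¹ * z * (c * w) = c⁻¹ * c * (z * w) := by ring
    rw [heq, inv_mul_cancel₀ hc, one_mul]
    exact st18_mem_resid.mp hz w hw

lemma st18_vop_span_dual {c : K} (hc : c ≠ 0) (X : Submodule R K) :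
    vop R K (Submodule.span R {c} * resid R K 1 X)
      = Submodule.span R {c} * resid R K 1 X := by
  have h := st18_resid_span_mul (c := c⁻¹) (inv_ne_zero hc) X
  rw [inv_inv] at h
  rw [← h]
  exact st18_vop_dual _

lemma st18_resid_sup {E A B : Submodule R K} :
    resid R K E (A ⊔ B) = resid R K E A ⊓ resid R K E B := by
  apply le_antisymm
  · exact le_inf (st18_resid_anti_right le_sup_left) (st18_resid_anti_right le_sup_right)
  · rintro x ⟨hA, hB⟩
    refine st18_mem_resid.mpr fun y hy => ?_
    obtain ⟨a, haA, b, hbB, rfl⟩ := Submodule.mem_sup.mp hy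
    rw [mul_add]
    exact add_mem (st18_mem_resid.mp hA a haA) (st18_mem_resid.mp hB b hbB)

lemma st18_mem_resid_span {E : Submodule R K} {z x : K} :
    x ∈ resid R K E (Submodule.span R {z}) ↔ x * z ∈ E := by
  constructor
  · intro h
    exact st18_mem_resid.mp h z (Submodule.mem_span_singleton_self z)
  · intro h
    refine st18_mem_resid.mpr fun y hy => ?_
    obtain ⟨r, rfl⟩ := Submodule.mem_span_singleton.mp hy
    rw [mul_smul_comm]
    exact E.smul_mem r h

end Statement18Lemmas
section Statement18Keys

open Submodule

lemma st18_keyA {R K : Type*} [CommRing R] [Field K] [Algebra R K]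
    (h : WStable R K) (S : Submodule R K) (hSfg : S.FG) (hS0 : S ≠ ⊥) (hSle : S ≤ 1) :
    ∃ H : Submodule R K, H.FG ∧ H ≠ ⊥ ∧
      resid R K 1 S = resid R K 1 (resid R K 1 H) := by
  set Γ := vop R K S with hΓdef
  have hΓ1 : Γ ≤ 1 := by rw [hΓdef, ← st18_vop_one]; exact st18_vop_mono hSle
  have hΓ0 : Γ ≠ ⊥ := fun hb => hS0 (le_bot_iff.mp ((st18_le_vop S).trans hb.le))
  have hΓdiv : vop R K Γ = Γ := st18_vop_idem S
  have hwΓ : wop R K Γ = Γ := st18_wop_of_vop hΓdiv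
  have hstabΓ := h Γ hΓ0 hΓ1
  rw [hwΓ] at hstabΓ
  set T := resid R K Γ Γ with hTdef
  -- hstabΓ : wop R K (Γ * resid R K T Γ) = T
  have hT1 : (1 : K) ∈ T := st18_mem_resid.mpr fun γ hγ => by
    rw [one_mul]; exact hγ
  have hΓT : Γ ≤ T := st18_le_resid_iff.mpr
    (Submodule.mul_le.mpr fun x hx y hy => st18_mul_mem_one_right hx (hΓ1 hy))
  have h1w : (1 : K) ∈ wop R K (Γ * resid R K T Γ) := by rw [hstabΓ]; exact hT1
  obtain ⟨F, hFgv, hFle⟩ := st18_one_mem_wop h1w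
  obtain ⟨D₀, E₀', hD₀fg, hE₀'fg, hD₀le, hE₀'le, hFle2⟩ := st18_fg_le_mul hFgv.1 hFle
  set E₀ := E₀' ⊔ Submodule.span R {(1 : K)} with hE₀def
  have hE₀fg : E₀.FG := hE₀'fg.sup (Submodule.fg_span_singleton _)
  have h1TΓ : (1 : K) ∈ resid R K T Γ := st18_mem_resid.mpr fun γ hγ => by
    rw [one_mul]; exact hΓT hγ
  have hE₀le : E₀ ≤ resid R K T Γ :=
    sup_le hE₀'le ((Submodule.span_singleton_le_iff_mem _ _).mpr h1TΓ)
  have hE₀0 : E₀ ≠ ⊥ := st18_ne_bot_iff.mpr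
    ⟨1, Submodule.mem_sup_right (Submodule.mem_span_singleton_self _), one_ne_zero⟩
  have hFle3 : F ≤ D₀ * E₀ := hFle2.trans (st18_mul_le_mul le_rfl le_sup_left)
  have hTdiv : vop R K T = T := st18_vop_resid hΓdiv Γ
  have hΓE₀T : Γ * E₀ ≤ T := Submodule.mul_le.mpr fun γ hγ e he => by
    have := st18_mem_resid.mp (hE₀le he) γ hγ
    rwa [mul_comm] at this
  have hTD : T * D₀ ≤ Γ := Submodule.mul_le.mpr fun t ht d hd =>
    st18_mem_resid.mp ht d (hD₀le hd)
  have hdown : T ≤ vop R K (Γ * E₀) := by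
    calc T ≤ wop R K (T * F) := st18_le_wop_mul hFgv
      _ ≤ wop R K (Γ * E₀) := st18_wop_mono (by
          calc T * F ≤ T * (D₀ * E₀) := st18_mul_le_mul le_rfl hFle3
            _ = (T * D₀) * E₀ := (mul_assoc _ _ _).symm
            _ ≤ Γ * E₀ := st18_mul_le_mul hTD le_rfl)
      _ ≤ vop R K (Γ * E₀) := st18_wop_le_vop _
  have hΓE : vop R K (Γ * E₀) = T :=
    le_antisymm ((st18_vop_mono hΓE₀T).trans hTdiv.le) hdown
  have hCv : vop R K (S * E₀) = T := by
    rw [← hΓE, hΓdef, mul_comm (vop R K S) E₀, st18_vop_mul_vop, mul_comm E₀ S]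
  set P := resid R K 1 T with hPdef
  have hPdiv : vop R K P = P := st18_vop_dual T
  have hP1 : P ≤ 1 := fun x hx => by
    have := st18_mem_resid.mp hx 1 hT1
    rwa [mul_one] at this
  obtain ⟨γ₀, hγ₀Γ, hγ₀0⟩ := st18_ne_bot_iff.mp hΓ0
  have hγ₀P : γ₀ ∈ P := st18_mem_resid.mpr fun t ht => by
    rw [mul_comm]; exact hΓ1 (st18_mem_resid.mp ht γ₀ hγ₀Γ)
  have hP0 : P ≠ ⊥ := st18_ne_bot_iff.mpr ⟨γ₀, hγ₀P, hγ₀0⟩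
  have hresP : resid R K 1 P = T := by
    rw [hPdef, ← st18_vop_def]; exact hTdiv
  have hTmul : ∀ t ∈ T, ∀ t' ∈ T, t * t' ∈ T := fun t ht t' ht' =>
    st18_mem_resid.mpr fun γ hγ => by
      rw [mul_assoc]
      exact st18_mem_resid.mp ht _ (st18_mem_resid.mp ht' γ hγ)
  have hPT : ∀ p ∈ P, ∀ t ∈ T, p * t ∈ P := fun p hp t ht =>
    st18_mem_resid.mpr fun t' ht' => by
      rw [mul_assoc]
      exact st18_mem_resid.mp hp _ (hTmul t ht t' ht')
  have hPP : resid R K P P = T := by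
    apply le_antisymm
    · exact (st18_resid_mono_left hP1).trans hresP.le
    · intro t ht
      exact st18_mem_resid.mpr fun p hp => by
        rw [mul_comm]; exact hPT p hp t ht
  have hstabP := h P hP0 hP1
  rw [st18_wop_of_vop hPdiv, hPP] at hstabP
  -- hstabP : wop R K (P * resid R K T P) = T
  have h1w2 : (1 : K) ∈ wop R K (P * resid R K T P) := by rw [hstabP]; exact hT1
  obtain ⟨F₁, hF₁gv, hF₁le⟩ := st18_one_mem_wop h1w2
  obtain ⟨D₁', E₁, hD₁'fg, hE₁fg, hD₁'le, hE₁le, hF₁le2⟩ := st18_fg_le_mul hF₁gv.1 hF₁le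
  set D₁ := D₁' ⊔ Submodule.span R {γ₀} with hD₁def
  have hD₁fg : D₁.FG := hD₁'fg.sup (Submodule.fg_span_singleton _)
  have hD₁P : D₁ ≤ P := sup_le hD₁'le ((Submodule.span_singleton_le_iff_mem _ _).mpr hγ₀P)
  have hD₁0 : D₁ ≠ ⊥ := st18_ne_bot_iff.mpr
    ⟨γ₀, Submodule.mem_sup_right (Submodule.mem_span_singleton_self _), hγ₀0⟩
  have hF₁le3 : F₁ ≤ D₁ * E₁ := hF₁le2.trans (st18_mul_le_mul le_sup_left le_rfl)
  have hCfg : (S * E₀).FG := hSfg.mul hE₀fg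
  have hC0 : S * E₀ ≠ ⊥ := st18_mul_ne_bot hS0 hE₀0
  have hCT : S * E₀ ≤ T := (st18_le_vop (S * E₀)).trans hCv.le
  have hH₀P : D₁ * (S * E₀) ≤ P :=
    Submodule.mul_le.mpr fun d hd c hc => hPT d (hD₁P hd) c (hCT hc)
  have hresC : resid R K 1 (S * E₀) = P := by
    rw [hPdef, ← hCv]
    exact (st18_dual_vop _).symm
  have key10 : resid R K 1 (D₁ * (S * E₀)) = T := by
    apply le_antisymm
    · intro x hx
      have hxD : ∀ d ∈ D₁, x * d ∈ P := fun d hd => by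
        rw [← hresC]
        exact st18_mem_resid.mpr fun c hc => by
          rw [mul_assoc]
          exact st18_mem_resid.mp hx _ (Submodule.mul_mem_mul hd hc)
      have hxF : x ∈ resid R K T F₁ := st18_mem_resid.mpr fun f hf => by
        refine Submodule.mul_induction_on (hF₁le3 hf)
          (fun d hd e he => ?_) (fun y z hy hz => ?_)
        · have h2 := st18_mem_resid.mp (hE₁le he) _ (hxD d hd)
          have heq : x * (d * e) = e * (x * d) := by ring
          rw [heq]; exact h2
        · rw [mul_add]; exact add_mem hy hz
      have hfin := st18_resid_le_wop hF₁gv hxF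
      rwa [st18_wop_of_vop hTdiv] at hfin
    · rw [← hresP]
      exact st18_resid_anti_right hH₀P
  have hPH₀ : vop R K (D₁ * (S * E₀)) = P := by
    rw [st18_vop_def, key10, hPdef]
  have hXS : resid R K 1 S = resid R K 1 Γ := (st18_dual_vop S).symm
  have sub1 : P * E₀ ≤ resid R K 1 Γ := Submodule.mul_le.mpr fun p hp e he =>
    st18_mem_resid.mpr fun γ hγ => by
      rw [mul_assoc]
      exact st18_mem_resid.mp hp _ (st18_mem_resid.mp (hE₀le he) γ hγ)
  have hXD : resid R K 1 Γ * D₀ ≤ P := Submodule.mul_le.mpr fun x hx d hd =>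
    st18_mem_resid.mpr fun t ht => by
      rw [mul_assoc]
      have hdt : d * t ∈ Γ := by
        rw [mul_comm]; exact st18_mem_resid.mp ht d (hD₀le hd)
      exact st18_mem_resid.mp hx _ hdt
  have sub2 : resid R K 1 Γ ≤ vop R K (P * E₀) := by
    calc resid R K 1 Γ ≤ wop R K (resid R K 1 Γ * F) := st18_le_wop_mul hFgv
      _ ≤ wop R K (P * E₀) := st18_wop_mono (by
          calc resid R K 1 Γ * F ≤ resid R K 1 Γ * (D₀ * E₀) :=
                st18_mul_le_mul le_rfl hFle3
            _ = (resid R K 1 Γ * D₀) * E₀ := (mul_assoc _ _ _).symm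
            _ ≤ P * E₀ := st18_mul_le_mul hXD le_rfl)
      _ ≤ vop R K (P * E₀) := st18_wop_le_vop _
  have hXeq : resid R K 1 Γ = vop R K (P * E₀) :=
    le_antisymm sub2 ((st18_vop_mono sub1).trans (st18_vop_dual Γ).le)
  have hfin : vop R K (P * E₀) = vop R K (D₁ * (S * E₀) * E₀) := by
    rw [mul_comm P E₀, ← hPH₀, st18_vop_mul_vop, mul_comm E₀ (D₁ * (S * E₀))]
  refine ⟨D₁ * (S * E₀) * E₀, (hD₁fg.mul hCfg).mul hE₀fg,
    st18_mul_ne_bot (st18_mul_ne_bot hD₁0 hC0) hE₀0, ?_⟩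
  rw [hXS, hXeq, hfin, st18_vop_def]

lemma st18_keyB {R K : Type*} [CommRing R] [IsDomain R] [Field K] [Algebra R K]
    [IsFractionRing R K] (h : WStable R K) (M : Submodule R K)
    (hM : IsOpMaxIdeal R K (top R K) M) :
    ∃ J : Submodule R K, J.FG ∧ J ≠ ⊥ ∧ J ≤ 1 ∧ vop R K J = M := by
  obtain ⟨hM0, hMlt, hMt, hMmax⟩ := hM
  have hMle : M ≤ 1 := hMlt.le
  have hwM : wop R K M = M :=
    le_antisymm ((st18_wop_le_top M).trans hMt.le) (st18_le_wop M)
  have hdiv : vop R K M = M := by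
    by_contra hne
    have hVM1 : vop R K M = 1 := by
      by_contra hV1
      have hVlt : vop R K M < 1 :=
        lt_of_le_of_ne ((st18_vop_mono hMle).trans st18_vop_one.le) hV1
      have hV0 : vop R K M ≠ ⊥ := fun hb =>
        hM0 (le_bot_iff.mp ((st18_le_vop M).trans hb.le))
      have hVt : top R K (vop R K M) = vop R K M :=
        le_antisymm ((st18_top_le_vop _).trans (st18_vop_idem M).le) (st18_le_top _)
      exact hne (hMmax (vop R K M) hV0 hVlt hVt (st18_le_vop M)).symm
    have hres1M : resid R K 1 M = 1 := by
      rw [← st18_dual_vop, hVM1, st18_resid_one_right]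
    have hMM : resid R K M M = 1 := by
      apply le_antisymm
      · exact (st18_resid_mono_left hMle).trans hres1M.le
      · exact st18_le_resid_iff.mpr (by rw [one_mul])
    have hstab := h M hM0 hMle
    rw [hwM, hMM, hres1M, mul_one, hwM] at hstab
    exact hMlt.ne hstab
  have hnotle : ¬ resid R K 1 M ≤ 1 := by
    intro hle
    have h1M : resid R K 1 M = 1 :=
      le_antisymm hle (st18_le_resid_iff.mpr (by rw [one_mul]; exact hMle))
    have hM1 : M = 1 := by
      rw [← hdiv, st18_vop_def, h1M, st18_resid_one_right]
    exact hMlt.ne hM1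
  obtain ⟨u, huM, hu1⟩ := SetLike.not_le_iff_exists.mp hnotle
  have hu0 : u ≠ 0 := fun h0 => hu1 (h0 ▸ zero_mem _)
  obtain ⟨⟨a, s⟩, has⟩ := IsLocalization.surj (nonZeroDivisors R) u
  have hb0 : algebraMap R K (s : R) ≠ 0 := by
    have hs0 : (s : R) ≠ 0 := nonZeroDivisors.ne_zero s.2
    intro hcontra
    exact hs0 ((map_eq_zero_iff _ (IsFractionRing.injective R K)).mp hcontra)
  set b : K := algebraMap R K (s : R) with hbdef
  set a' : K := algebraMap R K a with ha'def
  -- has : u * b = a'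
  set S : Submodule R K := Submodule.span R {a'} ⊔ Submodule.span R {b} with hSdef
  have hSfg : S.FG := (Submodule.fg_span_singleton _).sup (Submodule.fg_span_singleton _)
  have hS0 : S ≠ ⊥ := st18_ne_bot_iff.mpr
    ⟨b, Submodule.mem_sup_right (Submodule.mem_span_singleton_self b), hb0⟩
  have hSle : S ≤ 1 := sup_le
    ((Submodule.span_singleton_le_iff_mem _ _).mpr (Submodule.mem_one.mpr ⟨a, rfl⟩))
    ((Submodule.span_singleton_le_iff_mem _ _).mpr (Submodule.mem_one.mpr ⟨s, rfl⟩))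
  obtain ⟨H, hHfg, hH0, hHS⟩ := st18_keyA h S hSfg hS0 hSle
  have hMW : M ≤ Submodule.span R {b} * resid R K 1 S := by
    intro m hm
    have h1 : b⁻¹ * m ∈ resid R K 1 S := by
      rw [hSdef, st18_resid_sup]
      refine Submodule.mem_inf.mpr ⟨st18_mem_resid_span.mpr ?_, st18_mem_resid_span.mpr ?_⟩
      · rw [← has]
        have heq : b⁻¹ * m * (u * b) = b⁻¹ * b * (u * m) := by ring
        rw [heq, inv_mul_cancel₀ hb0, one_mul]
        exact st18_mem_resid.mp huM m hm
      · have heq : b⁻¹ * m * b = b⁻¹ * b * m := by ring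
        rw [heq, inv_mul_cancel₀ hb0, one_mul]
        exact hMle hm
    have heq : b * (b⁻¹ * m) = m := by
      rw [← mul_assoc, mul_inv_cancel₀ hb0, one_mul]
    exact heq ▸ Submodule.mul_mem_mul (Submodule.mem_span_singleton_self b) h1
  have hWle : Submodule.span R {b} * resid R K 1 S ≤ 1 := by
    refine Submodule.mul_le.mpr fun x hx y hy => ?_
    obtain ⟨r, rfl⟩ := Submodule.mem_span_singleton.mp hx
    rw [smul_mul_assoc]
    refine Submodule.smul_mem _ r ?_
    rw [mul_comm]
    exact st18_mem_resid.mp hy b (Submodule.mem_sup_right (Submodule.mem_span_singleton_self b))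
  have hWne1 : Submodule.span R {b} * resid R K 1 S ≠ 1 := by
    intro hW1
    have h1W : (1 : K) ∈ Submodule.span R {b} * resid R K 1 S := by
      rw [hW1]; exact st18_one_mem_one
    obtain ⟨z, hz, hbz⟩ := Submodule.mem_span_singleton_mul.mp h1W
    have hz' : z * a' = u := by
      rw [← has]
      calc z * (u * b) = u * (b * z) := by ring
        _ = u := by rw [hbz, mul_one]
    exact hu1 (hz' ▸ st18_mem_resid.mp hz a'
      (Submodule.mem_sup_left (Submodule.mem_span_singleton_self a')))
  have hWlt : Submodule.span R {b} * resid R K 1 S < 1 := lt_of_le_of_ne hWle hWne1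
  have hWdiv : vop R K (Submodule.span R {b} * resid R K 1 S)
      = Submodule.span R {b} * resid R K 1 S := st18_vop_span_dual hb0 S
  have hWtop : top R K (Submodule.span R {b} * resid R K 1 S)
      = Submodule.span R {b} * resid R K 1 S :=
    le_antisymm ((st18_top_le_vop _).trans hWdiv.le) (st18_le_top _)
  have hW0 : Submodule.span R {b} * resid R K 1 S ≠ ⊥ :=
    fun hbot => hM0 (le_bot_iff.mp (hMW.trans hbot.le))
  have hMeq : M = Submodule.span R {b} * resid R K 1 S :=
    hMmax _ hW0 hWlt hWtop hMW
  have hJv : vop R K (Submodule.span R {b} * H)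
      = Submodule.span R {b} * resid R K 1 S := by
    rw [hHS, ← st18_vop_mul_vop]
    exact st18_vop_span_dual hb0 (resid R K 1 H)
  refine ⟨Submodule.span R {b} * H, (Submodule.fg_span_singleton b).mul hHfg,
    st18_mul_ne_bot (by rw [Ne, Submodule.span_singleton_eq_bot]; exact hb0) hH0,
    ?_, by rw [hJv, ← hMeq]⟩
  calc Submodule.span R {b} * H ≤ vop R K (Submodule.span R {b} * H) := st18_le_vop _
    _ = Submodule.span R {b} * resid R K 1 S := hJv
    _ ≤ 1 := hWle

end Statement18Keys

/-- a `w`-stable domain `R` is `v`-coherent iff every `t`-maximal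
ideal of `R` is `v`-finite. -/
theorem statement_18 {R K : Type*} [CommRing R] [IsDomain R] [Field K] [Algebra R K]
    [IsFractionRing R K] (h : WStable R K) :
    SubringVCoherent R K 1 ↔
      ∀ M : Submodule R K, IsOpMaxIdeal R K (top R K) M →
        ∃ J : Submodule R K, J.FG ∧ J ≠ ⊥ ∧ J ≤ 1 ∧ vop R K J = M := by
  constructor
  · intro _ M hM
    exact st18_keyB h M hM
  · intro _ S hSfg hS0 hSle
    obtain ⟨H, h1, h2, h3⟩ := st18_keyA h S hSfg hS0 hSle
    exact ⟨H, h1, h2, by rw [mul_one, mul_one]; exact h3⟩
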